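/- Let K be a field with a derivation D, let V ⊆ Kⁿ be the zero set of an ideal whose vanishing ideal I(V) decomposes via polynomials, and suppose V₁,...,Vₛ are subsets of Kⁿ with V = V₁ ∪ ... ∪ Vₛ, each Vⱼ defined by a vanishing ideal I(Vⱼ). If a ∈ Vᵢ but a ∉ Vⱼ for all j ≠ i, then for every b ∈ Kⁿ: (τf)(a,b) = 0 for all f ∈ I(V) implies (τf)(a,b) = 0 for all f ∈ I(Vᵢ). (Fibre of the prolongation of V at a equals the fibre of the prolongation of the component Vᵢ.) -/
import Mathlib


open MvPolynomial

/-- Applying `D` to each coefficient of a multivariate polynomial. -/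
noncomputable def coeffMap {R S : Type*} [CommRing R] [CommRing S] {σ : Type*}
    (D : R → S) (f : MvPolynomial σ R) : MvPolynomial σ S :=
  f.support.sum fun m => monomial m (D (coeff m f))

/-- The prolongation operator `τ f = ∑ i, (∂f/∂Xᵢ) * Yᵢ + f^D`, landing in the
polynomial ring `R[X₁,…,Xₙ,Y₁,…,Yₙ]` (variables indexed by `Fin n ⊕ Fin n`,
with `Sum.inl` the `X`'s and `Sum.inr` the `Y`'s). -/
noncomputable def tau {R : Type*} [CommRing R] {n : ℕ} (D : R → R)
    (f : MvPolynomial (Fin n) R) : MvPolynomial (Fin n ⊕ Fin n) R :=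
  (∑ i, rename Sum.inl (pderiv i f) * X (Sum.inr i)) + rename Sum.inl (coeffMap D f)

lemma coeff_coeffMap {R S : Type*} [CommRing R] [CommRing S] {σ : Type*}
    (D : R → S) (hD0 : D 0 = 0) (f : MvPolynomial σ R) (m : σ →₀ ℕ) :
    coeff m (coeffMap D f) = D (coeff m f) := by
  classical
  unfold coeffMap
  rw [coeff_sum]
  by_cases h : m ∈ f.support
  · rw [Finset.sum_eq_single m]
    · simp
    · intro k _ hk; simp [coeff_monomial, hk]
    · intro hm; exact absurd h hm
  · rw [Finset.sum_eq_zero]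
    · simp at h; rw [h, hD0]
    · intro k hk
      have : k ≠ m := by rintro rfl; exact h hk
      simp [coeff_monomial, this]

section
variable {K : Type*} [Field K] {n : ℕ} (D : K → K)
  (hadd : ∀ x y : K, D (x + y) = D x + D y)
  (hmul : ∀ x y : K, D (x * y) = D x * y + x * D y)

include hadd in
lemma hD0 : D 0 = 0 := by
  have h := hadd 0 0
  rw [add_zero] at h
  exact (left_eq_add.mp h)

include hadd hmul in
lemma coeffMap_mul (f g : MvPolynomial (Fin n) K) :
    coeffMap D (f * g) = f * coeffMap D g + coeffMap D f * g := by
  have h0 : D 0 = 0 := hD0 D hadd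
  let D' : K →+ K := AddMonoidHom.mk' D hadd
  ext m
  rw [coeff_coeffMap D h0, coeff_add, coeff_mul, coeff_mul, coeff_mul]
  show D' _ = _
  rw [map_sum]
  rw [← Finset.sum_add_distrib]
  apply Finset.sum_congr rfl
  intro p _
  show D (coeff p.1 f * coeff p.2 g) = _
  rw [hmul, coeff_coeffMap D h0, coeff_coeffMap D h0]
  ring

include hadd hmul in
lemma tau_mul (f g : MvPolynomial (Fin n) K) :
    tau D (f * g) = rename Sum.inl g * tau D f + rename Sum.inl f * tau D g := by
  unfold tau
  rw [coeffMap_mul D hadd hmul f g]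
  have hp : ∀ i : Fin n, pderiv i (f * g) = pderiv i f * g + f * pderiv i g := fun i =>
    pderiv_mul
  simp only [hp, map_add, map_mul, add_mul, mul_add, Finset.sum_add_distrib,
    Finset.mul_sum]
  ring_nf
  have h1 : ∀ x : Fin n, (rename Sum.inl) ((pderiv x) f) * (rename Sum.inl) g * X (Sum.inr x)
      = (rename Sum.inl) g * (rename Sum.inl) ((pderiv x) f) * X (Sum.inr x) := fun x => by ring
  simp only [h1]
  abel

end

/-- If `a` lies in the component `Vᵢ` of `V = V₁ ∪ ⋯ ∪ Vₛ` and in no other component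
(witnessed by polynomials `gⱼ` vanishing on `Vⱼ` with `gⱼ(a) ≠ 0`), then the fibre of
the prolongation of `V` at `a` equals the fibre of the prolongation of `Vᵢ` at `a`. -/
theorem stmt16 {K : Type*} [Field K] [CharZero K] {n s : ℕ}
    (D : K → K)
    (hadd : ∀ x y : K, D (x + y) = D x + D y)
    (hmul : ∀ x y : K, D (x * y) = D x * y + x * D y)
    (V : Set (Fin n → K)) (Vs : Fin s → Set (Fin n → K))
    (hV : V = ⋃ j, Vs j)
    (i : Fin s) (a : Fin n → K)
    (ha : a ∈ Vs i)
    (ha' : ∀ j, j ≠ i → a ∉ Vs j)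
    (hg : ∀ j, j ≠ i → ∃ g : MvPolynomial (Fin n) K,
      (∀ x ∈ Vs j, eval x g = 0) ∧ eval a g ≠ 0)
    (b : Fin n → K)
    (hb : ∀ f : MvPolynomial (Fin n) K,
      (∀ x ∈ V, eval x f = 0) → eval (Sum.elim a b) (tau D f) = 0) :
    ∀ f : MvPolynomial (Fin n) K,
      (∀ x ∈ Vs i, eval x f = 0) → eval (Sum.elim a b) (tau D f) = 0 := by
  classical
  intro f hf
  choose g hg1 hg2 using hg
  set g' : Fin s → MvPolynomial (Fin n) K :=
    fun j => if h : j = i then 1 else g j h with hg'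
  have hg'1 : ∀ j, j ≠ i → ∀ x ∈ Vs j, eval x (g' j) = 0 := by
    intro j hj x hx
    simp only [hg', dif_neg hj]
    exact hg1 j hj x hx
  have hg'2 : ∀ j, eval a (g' j) ≠ 0 := by
    intro j
    by_cases h : j = i
    · simp [hg', h]
    · simp only [hg', dif_neg h]; exact hg2 j h
  set G : MvPolynomial (Fin n) K := ∏ j, g' j with hG
  have hGa : eval a G ≠ 0 := by
    rw [hG, map_prod]
    exact Finset.prod_ne_zero_iff.mpr fun j _ => hg'2 j
  have hvan : ∀ x ∈ V, eval x (G * f) = 0 := by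
    intro x hx
    rw [hV] at hx
    obtain ⟨j, hj⟩ := Set.mem_iUnion.mp hx
    by_cases h : j = i
    · rw [map_mul, hf x (h ▸ hj), mul_zero]
    · rw [map_mul, hG, map_prod, Finset.prod_eq_zero (Finset.mem_univ j)
        (hg'1 j h x hj), zero_mul]
  have key := hb (G * f) hvan
  rw [tau_mul D hadd hmul G f, map_add, map_mul, map_mul] at key
  have helim : ∀ p : MvPolynomial (Fin n) K,
      eval (Sum.elim a b) (rename Sum.inl p) = eval a p := by
    intro p
    rw [eval_rename]
    simp
  rw [helim f, helim G, hf a ha, zero_mul, zero_add] at key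
  exact (mul_eq_zero.mp key).resolve_left hGa
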